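/- If G is a softly reduced strong Gröbner basis (of a submodule of R[x₁,…,x_n]^k over a Euclidean domain R) in which every element is normalized, then G is a reduced strong Gröbner basis. -/

import Mathlib

/-!
Let `f ∈ G` have leading monomial `m` and leading coefficient `b`, and let `L` be the set of
leading coefficients of the elements of `I` with leading monomial `m`. The heart of the argument
is that `b` has minimal `δ̂` in `L`. Take `b₀ ∈ L` of minimal `δ̂` and, by the Gröbner property,
`g ∈ G` whose leading term divides the corresponding one. If `g ≠ f`, the remainder of `b` modulo
`Lc(g)` is a leading coefficient of `f - t·x^γ·g`, hence lies in `L` (it is nonzero because `f`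
is not softly reducible), and its `δ` is below `δ(Lc g) ≤ δ(b₀)`. If `g = f`, then `b ∣ b₀`, and
dividing `b` by `b₀` shows that `b₀` is an associate of `b`, so normalization of `f` gives
`δ̂(b) ≤ δ̂(b₀)`.

A reduction of the leading term of `f` by `g ∈ G ∖ {f}` would then produce the element
`b - q·Lc(g)` of `L` with `δ̂` below `δ̂(b)`, while a reduction of any other term of `f` is a
reduction of `f - Lt(f)`, which soft reducedness excludes.
-/

open MvPolynomial

/-- Polynomial vectors: `R[x₁,…,x_n]^k`. -/
abbrev PolyVec (R : Type*) [CommSemiring R] (n k : ℕ) := Fin k → MvPolynomial (Fin n) R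

/-- Monomial vectors `x^α e_i`, encoded as pairs `(α, i)`. -/
abbrev MonV (n k : ℕ) := (Fin n →₀ ℕ) × Fin k

/-- An admissible order on monomial vectors. -/
structure AdmissibleOrder (n k : ℕ) where
  le : MonV n k → MonV n k → Prop
  refl : ∀ a, le a a
  trans : ∀ a b c, le a b → le b c → le a c
  antisymm : ∀ a b, le a b → le b a → a = b
  total : ∀ a b, le a b ∨ le b a
  dvd_le : ∀ (α β : Fin n →₀ ℕ) (i : Fin k), (∀ m, α m ≤ β m) → le (α, i) (β, i)
  add_le : ∀ (α β γ : Fin n →₀ ℕ) (i j : Fin k),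
    le (α, i) (β, j) → le (α + γ, i) (β + γ, j)

variable {R : Type*} [CommRing R] {n k : ℕ}

/-- `m` is the leading monomial vector of `f` w.r.t. the admissible order `r`
(so in particular `f ≠ 0`). -/
def IsDeg (r : AdmissibleOrder n k) (f : PolyVec R n k) (m : MonV n k) : Prop :=
  (f m.2).coeff m.1 ≠ 0 ∧ ∀ m' : MonV n k, (f m'.2).coeff m'.1 ≠ 0 → r.le m' m

/-- The leading term vector of `g` divides the leading term vector of `f`:
same position, componentwise smaller exponent, and the leading coefficient of `g`
divides that of `f` in `R`. -/
def LtDvd (r : AdmissibleOrder n k) (g f : PolyVec R n k) : Prop :=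
  ∃ mg mf : MonV n k, IsDeg r g mg ∧ IsDeg r f mf ∧ mg.2 = mf.2 ∧
    (∀ m, mg.1 m ≤ mf.1 m) ∧ (g mg.2).coeff mg.1 ∣ (f mf.2).coeff mf.1

/-- `G` is a strong Gröbner basis of the submodule `I` w.r.t. `r`. -/
def IsSGB (r : AdmissibleOrder n k) (G : Set (PolyVec R n k))
    (I : Submodule (MvPolynomial (Fin n) R) (PolyVec R n k)) : Prop :=
  (∀ g ∈ G, g ∈ I ∧ g ≠ 0) ∧
  ∀ f ∈ I, f ≠ 0 → ∃ g ∈ G, LtDvd r g f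

/-- Multiplication of a polynomial vector by the term `a·x^m`. -/
noncomputable def termSMul (m : Fin n →₀ ℕ) (a : R) (g : PolyVec R n k) : PolyVec R n k :=
  fun j => MvPolynomial.monomial m a * g j

/-- `f` has a strong standard representation by `G`: `f = Σ aᵢ mᵢ gᵢ` with `gᵢ ∈ G`,
`Lm(m₁g₁) = Lm(f)` and `Lm(mᵢgᵢ) < Lm(f)` for `i ≥ 2`. -/
def IsSSR (r : AdmissibleOrder n k) (G : Set (PolyVec R n k)) (f : PolyVec R n k) : Prop :=
  ∃ (N : ℕ) (hN : 0 < N) (a : Fin N → R) (m : Fin N → (Fin n →₀ ℕ))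
    (g : Fin N → PolyVec R n k),
    (∀ i, g i ∈ G) ∧
    f = ∑ i, termSMul (m i) (a i) (g i) ∧
    ∃ mf m0 : MonV n k, IsDeg r f mf ∧ IsDeg r (g ⟨0, hN⟩) m0 ∧
      ((m ⟨0, hN⟩ + m0.1, m0.2) : MonV n k) = mf ∧
      ∀ i : Fin N, i ≠ ⟨0, hN⟩ → ∃ mi : MonV n k, IsDeg r (g i) mi ∧
        r.le (m i + mi.1, mi.2) mf ∧ ((m i + mi.1, mi.2) : MonV n k) ≠ mf

/-- `h` is an `S`-polynomial vector of the ordered pair `(f, g)` w.r.t. the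
Euclidean grading `δ`. -/
def IsSPolyPair {W : Type*} [LinearOrder W] (δ : R → W) (r : AdmissibleOrder n k)
    (f g h : PolyVec R n k) : Prop :=
  ∃ mf mg : MonV n k, IsDeg r f mf ∧ IsDeg r g mg ∧
    ((mf.2 ≠ mg.2 ∧ h = 0) ∨
     (mf.2 = mg.2 ∧ δ ((g mg.2).coeff mg.1) ≤ δ ((f mf.2).coeff mf.1) ∧
       ∃ q : R,
         δ ((f mf.2).coeff mf.1 - q * (g mg.2).coeff mg.1) < δ ((f mf.2).coeff mf.1) ∧
         h = termSMul ((mf.1 ⊔ mg.1) - mg.1) 1 f - termSMul ((mf.1 ⊔ mg.1) - mf.1) q g))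

/-- `h` is an `S`-polynomial vector of the (unordered) set `{f, g}`. -/
def IsSPolySet {W : Type*} [LinearOrder W] (δ : R → W) (r : AdmissibleOrder n k)
    (f g h : PolyVec R n k) : Prop :=
  IsSPolyPair δ r f g h ∨ IsSPolyPair δ r g f h

section Reduction

variable {R : Type*} [CommRing R] {n k : ℕ} {W' : Type*} [LinearOrder W']

/-- The term `b·x^α e_i` is reducible by `G`: some `g ∈ G` has `Lm(g) ∣ x^α e_i` and
`δ̂(b − q·Lc(g)) < δ̂(b)` for some `q ∈ R`. -/
def TermRed (dh : R → W') (r : AdmissibleOrder n k) (G : Set (PolyVec R n k))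
    (b : R) (α : Fin n →₀ ℕ) (i : Fin k) : Prop :=
  ∃ g ∈ G, ∃ mg : MonV n k, IsDeg r g mg ∧ mg.2 = i ∧ (∀ m, mg.1 m ≤ α m) ∧
    ∃ q : R, dh (b - q * (g mg.2).coeff mg.1) < dh b

/-- `f` is reducible by `G` if one of its terms is reducible by `G`. -/
def Red (dh : R → W') (r : AdmissibleOrder n k) (G : Set (PolyVec R n k))
    (f : PolyVec R n k) : Prop :=
  ∃ (α : Fin n →₀ ℕ) (i : Fin k), (f i).coeff α ≠ 0 ∧ TermRed dh r G ((f i).coeff α) α i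

/-- `p` is normalized: `p ≠ 0` and `δ̂(Lc p) ≤ δ̂(u · Lc p)` for every unit `u`. -/
def Normalized (dh : R → W') (r : AdmissibleOrder n k) (p : PolyVec R n k) : Prop :=
  p ≠ 0 ∧ ∃ mp : MonV n k, IsDeg r p mp ∧
    ∀ u : R, IsUnit u → dh ((p mp.2).coeff mp.1) ≤ dh (u * (p mp.2).coeff mp.1)

/-- `G` is a reduced strong Gröbner basis of `I`. -/
def IsRedSGB (dh : R → W') (r : AdmissibleOrder n k) (G : Set (PolyVec R n k))
    (I : Submodule (MvPolynomial (Fin n) R) (PolyVec R n k)) : Prop :=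
  IsSGB r G I ∧ ∀ g ∈ G, Normalized dh r g ∧ ¬ Red dh r (G \ {g}) g

end Reduction

section Twelve

variable {R : Type*} [CommRing R] {n k : ℕ} {W' : Type*} [LinearOrder W']

/-- The polynomial vector `p · e_i`. -/
noncomputable def eVec (i : Fin k) (p : MvPolynomial (Fin n) R) : PolyVec R n k :=
  fun j => if j = i then p else 0

/-- `f` is softly reducible by `G`: `f − Lt(f)` is reducible by `G`, or some `g ∈ G`
has `Lt(g) ∣ Lt(f)`. -/
def SoftRed (dh : R → W') (r : AdmissibleOrder n k) (G : Set (PolyVec R n k))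
    (f : PolyVec R n k) : Prop :=
  (∃ m : MonV n k, IsDeg r f m ∧
      Red dh r G (f - eVec m.2 (MvPolynomial.monomial m.1 ((f m.2).coeff m.1)))) ∨
  (∃ g ∈ G, LtDvd r g f)

/-- `G` is softly reduced: no element is softly reducible by the others. -/
def SoftlyReduced (dh : R → W') (r : AdmissibleOrder n k)
    (G : Set (PolyVec R n k)) : Prop :=
  ∀ f ∈ G, ¬ SoftRed dh r (G \ {f}) f

end Twelve

section LeadingTerms

variable {r : AdmissibleOrder n k}

lemma IsDeg.ne_zero {f : PolyVec R n k} {m : MonV n k} (h : IsDeg r f m) : f ≠ 0 :=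
  fun hf => h.1 (by simp [hf])

lemma IsDeg.unique {f : PolyVec R n k} {m m' : MonV n k} (h : IsDeg r f m)
    (h' : IsDeg r f m') : m = m' :=
  r.antisymm _ _ (h'.2 m h.1) (h.2 m' h'.1)

lemma IsDeg.le_of_coeff_termSMul_ne_zero {g : PolyVec R n k} {mg : MonV n k}
    (hg : IsDeg r g mg) {γ β : Fin n →₀ ℕ} {t : R} {j : Fin k}
    (h : (termSMul γ t g j).coeff β ≠ 0) : r.le (β, j) (mg.1 + γ, mg.2) := by
  rw [termSMul, coeff_monomial_mul'] at h
  split_ifs at h with hγ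
  · have hle := r.add_le _ _ γ _ _ (hg.2 (β - γ, j) (right_ne_zero_of_mul h))
    rwa [tsub_add_cancel_of_le hγ] at hle
  · exact absurd rfl h

lemma coeff_sub_termSMul {u g : PolyVec R n k} {mu mg : MonV n k} (hpos : mg.2 = mu.2)
    (hle : ∀ x, mg.1 x ≤ mu.1 x) (t : R) :
    ((u - termSMul (mu.1 - mg.1) t g) mu.2).coeff mu.1 =
      (u mu.2).coeff mu.1 - t * (g mg.2).coeff mg.1 := by
  rw [Pi.sub_apply, coeff_sub, termSMul, coeff_monomial_mul', if_pos tsub_le_self,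
    tsub_tsub_cancel_of_le (Finsupp.le_def.2 hle), hpos]

lemma IsDeg.sub_termSMul {u g : PolyVec R n k} {mu mg : MonV n k} (hu : IsDeg r u mu)
    (hg : IsDeg r g mg) (hpos : mg.2 = mu.2) (hle : ∀ x, mg.1 x ≤ mu.1 x) {t : R}
    (hne : (u mu.2).coeff mu.1 - t * (g mg.2).coeff mg.1 ≠ 0) :
    IsDeg r (u - termSMul (mu.1 - mg.1) t g) mu := by
  refine ⟨by rwa [coeff_sub_termSMul hpos hle], fun ⟨β, j⟩ hβ => ?_⟩
  rw [Pi.sub_apply, coeff_sub] at hβ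
  by_cases hu0 : (u j).coeff β = 0
  · have hle' := hg.le_of_coeff_termSMul_ne_zero (by simpa [hu0] using hβ)
    rwa [add_tsub_cancel_of_le (Finsupp.le_def.2 hle), hpos] at hle'
  · exact hu.2 (β, j) hu0

lemma coeff_sub_eVec_monomial_of_ne {f : PolyVec R n k} {m : MonV n k} (c : R)
    {α : Fin n →₀ ℕ} {i : Fin k} (h : ((α, i) : MonV n k) ≠ m) :
    ((f - eVec m.2 (monomial m.1 c)) i).coeff α = (f i).coeff α := by
  rw [Pi.sub_apply, coeff_sub, eVec]
  split_ifs with hi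
  · rw [coeff_monomial, if_neg fun hα => h (Prod.ext hα.symm hi), sub_zero]
  · rw [coeff_zero, sub_zero]

end LeadingTerms

lemma le_of_dvd_of_ne_zero {W : Type*} [LinearOrder W] {δ : R → W}
    (hmul : ∀ a b : R, a ≠ 0 → δ b ≤ δ (a * b)) {a b : R} (hb : b ≠ 0) (hdvd : a ∣ b) :
    δ a ≤ δ b := by
  obtain ⟨d, rfl⟩ := hdvd
  rw [mul_comm]
  exact hmul d a (right_ne_zero_of_mul hb)

lemma associated_of_dvd_of_le {W W' : Type*} [LinearOrder W] [LinearOrder W']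
    {δ : R → W} {dh : R → W'}
    (hmul : ∀ a b : R, a ≠ 0 → δ b ≤ δ (a * b))
    (hdiv : ∀ a b : R, a ≠ 0 → ∃ q s : R, b = q * a + s ∧ δ s < δ a)
    (hmono : ∀ a b : R, δ a < δ b → dh a < dh b)
    {b b₀ : R} (hb₀ : b₀ ≠ 0) (hdvd : b ∣ b₀) (hle : dh b₀ ≤ dh b) : Associated b b₀ := by
  obtain ⟨e, rfl⟩ := hdvd
  obtain ⟨t, s, hts, hs⟩ := hdiv _ b hb₀
  by_cases hunit : 1 - t * e = 0
  · exact associated_mul_unit_right b e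
      (IsUnit.of_mul_eq_one (a := e) t (by linear_combination -hunit))
  · have hs_eq : s = (1 - t * e) * b := by linear_combination -hts
    have hδ : δ b < δ (b * e) := (hmul _ b hunit).trans_lt (hs_eq ▸ hs)
    exact absurd hle (not_le.2 (hmono _ _ hδ))

section LeadCoeffs

variable {W' : Type*} [LinearOrder W'] {dh : R → W'} {r : AdmissibleOrder n k}
  {I : Submodule (MvPolynomial (Fin n) R) (PolyVec R n k)}

def leadCoeffs (r : AdmissibleOrder n k)
    (I : Submodule (MvPolynomial (Fin n) R) (PolyVec R n k)) (m : MonV n k) : Set R :=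
  {b | ∃ h ∈ I, IsDeg r h m ∧ (h m.2).coeff m.1 = b}

lemma sub_mul_leadCoeff_mem_leadCoeffs {G : Set (PolyVec R n k)} {f g : PolyVec R n k}
    {mf mg : MonV n k} (hf : f ∈ I) (hg : g ∈ I) (hsoft : ¬ SoftRed dh r G f) (hgG : g ∈ G)
    (hfd : IsDeg r f mf) (hgd : IsDeg r g mg) (hpos : mg.2 = mf.2)
    (hle : ∀ x, mg.1 x ≤ mf.1 x) (t : R) :
    (f mf.2).coeff mf.1 - t * (g mg.2).coeff mg.1 ∈ leadCoeffs r I mf := by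
  have hne : (f mf.2).coeff mf.1 - t * (g mg.2).coeff mg.1 ≠ 0 := fun h0 =>
    hsoft (Or.inr ⟨g, hgG, mg, mf, hgd, hfd, hpos, hle,
      Dvd.intro_left t (sub_eq_zero.1 h0).symm⟩)
  exact ⟨_, I.sub_mem hf (I.smul_mem (monomial (mf.1 - mg.1) t) hg),
    hfd.sub_termSMul hgd hpos hle hne, coeff_sub_termSMul hpos hle t⟩

lemma dh_leadCoeff_le_of_mem_leadCoeffs [WellFoundedLT W'] {W : Type*} [LinearOrder W]
    {δ : R → W}
    (hmul : ∀ a b : R, a ≠ 0 → δ b ≤ δ (a * b))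
    (hdiv : ∀ a b : R, a ≠ 0 → ∃ q s : R, b = q * a + s ∧ δ s < δ a)
    (hmono : ∀ a b : R, δ a < δ b → dh a < dh b)
    {G : Set (PolyVec R n k)} (hG : IsSGB r G I) {f : PolyVec R n k} (hfG : f ∈ G)
    (hsoft : ¬ SoftRed dh r (G \ {f}) f) (hfn : Normalized dh r f)
    {mf : MonV n k} (hfd : IsDeg r f mf) {b : R} (hb : b ∈ leadCoeffs r I mf) :
    dh ((f mf.2).coeff mf.1) ≤ dh b := by
  obtain ⟨b₀, hb₀, hmin⟩ := (InvImage.wf dh wellFounded_lt).has_min _ ⟨b, hb⟩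
  refine le_trans ?_ (not_lt.1 (hmin b hb))
  have hfL : (f mf.2).coeff mf.1 ∈ leadCoeffs r I mf := ⟨f, (hG.1 f hfG).1, hfd, rfl⟩
  obtain ⟨h₀, hh₀I, hh₀d, rfl⟩ := hb₀
  obtain ⟨g, hgG, mg, mh, hgd, hhd, hpos, hle, hdvd⟩ := hG.2 h₀ hh₀I hh₀d.ne_zero
  obtain rfl := hh₀d.unique hhd
  by_cases hgf : g = f
  · subst hgf
    obtain rfl := hfd.unique hgd
    obtain ⟨u, hu⟩ :=
      associated_of_dvd_of_le hmul hdiv hmono hh₀d.1 hdvd (not_lt.1 (hmin _ hfL))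
    obtain ⟨-, mp, hpd, hnorm⟩ := hfn
    obtain rfl := hfd.unique hpd
    calc dh ((g mf.2).coeff mf.1) ≤ dh (u * (g mf.2).coeff mf.1) := hnorm u u.isUnit
      _ = dh ((h₀ mf.2).coeff mf.1) := by rw [mul_comm, hu]
  · obtain ⟨t, s, hts, hs⟩ := hdiv _ ((f mf.2).coeff mf.1) hgd.1
    have hsL : s ∈ leadCoeffs r I mf := by
      convert sub_mul_leadCoeff_mem_leadCoeffs (hG.1 f hfG).1 (hG.1 g hgG).1 hsoft
        ⟨hgG, hgf⟩ hfd hgd hpos hle t using 1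
      linear_combination -hts
    exact (hmin s hsL (hmono _ _ (hs.trans_le (le_of_dvd_of_ne_zero hmul hh₀d.1 hdvd)))).elim

end LeadCoeffs

theorem reduced_of_softly_reduced_and_normalized_general
    {R : Type*} [CommRing R] {n k : ℕ}
    {W : Type*} [LinearOrder W]
    {W' : Type*} [LinearOrder W'] [WellFoundedLT W']
    (δ : R → W)
    (hmul : ∀ a b : R, a ≠ 0 → δ b ≤ δ (a * b))
    (hdiv : ∀ a b : R, a ≠ 0 → ∃ q s : R, b = q * a + s ∧ δ s < δ a)
    (dh : R → W')
    (hmono : ∀ a b : R, δ a < δ b → dh a < dh b)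
    (r : AdmissibleOrder n k)
    (I : Submodule (MvPolynomial (Fin n) R) (PolyVec R n k))
    (G : Set (PolyVec R n k))
    (hSGB : IsSGB r G I)
    (hsoft : SoftlyReduced dh r G)
    (hnorm : ∀ g ∈ G, Normalized dh r g) :
    IsRedSGB dh r G I := by
  refine ⟨hSGB, fun f hf => ⟨hnorm f hf, ?_⟩⟩
  rintro ⟨α, i, hci, g, hg, mg, hgd, hpos, hle, q, hq⟩
  obtain ⟨-, mf, hfd, -⟩ := hnorm f hf
  by_cases hlead : ((α, i) : MonV n k) = mf
  · subst hlead
    have hL := sub_mul_leadCoeff_mem_leadCoeffs (hSGB.1 f hf).1 (hSGB.1 g hg.1).1 (hsoft f hf)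
      hg hfd hgd hpos hle q
    exact (dh_leadCoeff_le_of_mem_leadCoeffs hmul hdiv hmono hSGB hf (hsoft f hf) (hnorm f hf)
      hfd hL).not_gt hq
  · have hcoeff := coeff_sub_eVec_monomial_of_ne (f := f) ((f mf.2).coeff mf.1) hlead
    exact hsoft f hf (Or.inl ⟨mf, hfd, α, i, hcoeff ▸ hci, g, hg, mg, hgd, hpos, hle, q,
      hcoeff ▸ hq⟩)

/-- A softly reduced strong Gröbner basis all of whose elements are
normalized is a reduced strong Gröbner basis. -/
theorem reduced_of_softly_reduced_and_normalized
    {R : Type*} [CommRing R] [IsDomain R] {n k : ℕ}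
    {W : Type*} [LinearOrder W] [WellFoundedLT W]
    {W' : Type*} [LinearOrder W'] [WellFoundedLT W']
    (δ : R → W)
    (hzero : ∀ a : R, δ 0 ≤ δ a)
    (hmul : ∀ a b : R, a ≠ 0 → δ b ≤ δ (a * b))
    (hdiv : ∀ a b : R, a ≠ 0 → ∃ q s : R, b = q * a + s ∧ δ s < δ a)
    (dh : R → W') (hinj : Function.Injective dh)
    (dh0 : ∀ a : R, dh 0 ≤ dh a)
    (hmono : ∀ a b : R, δ a < δ b → dh a < dh b)
    (r : AdmissibleOrder n k)
    (I : Submodule (MvPolynomial (Fin n) R) (PolyVec R n k))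
    (G : Set (PolyVec R n k))
    (hSGB : IsSGB r G I)
    (hsoft : SoftlyReduced dh r G)
    (hnorm : ∀ g ∈ G, Normalized dh r g) :
    IsRedSGB dh r G I :=
  reduced_of_softly_reduced_and_normalized_general δ hmul hdiv dh hmono r I G hSGB hsoft hnorm
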